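/- Let 𝔖_A, 𝔖_B be orthocomplemented spaces of states admitting descriptions in terms of pure states, neither of which is a simplex, with effect spaces ℰ_A = Ē_{𝔖_A} and ℰ_B = Ē_{𝔖_B} the reduced effect spaces. Then the minimal tensor product is strictly contained in the regular tensor product: 𝔖_A⊗̃𝔖_B ⊊ 𝔖_A⊗̂𝔖_B. -/
import Mathlib


/-! ## The boolean domain 𝔅 -/

/-- The boolean domain `𝔅 = {⊥, Y, N}`. -/
inductive BD : Type where
  | bot : BD
  | Y : BD
  | N : BD
  deriving DecidableEq

namespace BD

instance : PartialOrder BD where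
  le u v := u = bot ∨ u = v
  le_refl u := Or.inr rfl
  le_trans u v w huv hvw := by
    rcases huv with h | h
    · exact Or.inl h
    · subst h; exact hvw
  le_antisymm u v huv hvu := by
    rcases huv with h | h
    · rcases hvu with h' | h'
      · rw [h, h']
      · exact h'.symm
    · exact h

instance : OrderBot BD where
  bot := bot
  bot_le u := Or.inl rfl

instance : SemilatticeInf BD where
  inf u v := if u = v then u else bot
  inf_le_left u v := by
    show (if u = v then u else bot) = bot ∨ (if u = v then u else bot) = u
    by_cases h : u = v
    · simp [h]
    · simp [h]
  inf_le_right u v := by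
    show (if u = v then u else bot) = bot ∨ (if u = v then u else bot) = v
    by_cases h : u = v
    · simp [h]
    · simp [h]
  le_inf u v w huv huw := by
    show u = bot ∨ u = (if v = w then v else bot)
    rcases huv with h | h
    · exact Or.inl h
    · rcases huw with h' | h'
      · exact Or.inl h'
      · right
        rw [← h, ← h']
        simp

/-- The involution of `𝔅`, fixing `⊥` and exchanging `Y` and `N`. -/
def inv : BD → BD
  | bot => bot
  | Y => N
  | N => Y

/-- The commutative monoid product `•` on `𝔅`. -/
def prod : BD → BD → BD
  | N, _ => N
  | _, N => N
  | Y, Y => Y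
  | _, _ => bot

end BD

/-! ## Spaces of states -/

/-- A preorder is down-complete if every nonempty subset has a greatest lower bound. -/
def DownComplete (S : Type*) [Preorder S] : Prop :=
  ∀ T : Set S, T.Nonempty → ∃ g : S, IsGLB T g

/-- A state is pure (completely meet-irreducible) if it belongs to every nonempty
subset of which it is the greatest lower bound. -/
def PureState {S : Type*} [Preorder S] (σ : S) : Prop :=
  ∀ T : Set S, T.Nonempty → IsGLB T σ → σ ∈ T

/-- `S` admits a description in terms of pure states: the pure states are exactly the
maximal elements, and every state is the infimum of the (nonempty) set of pure states
above it. -/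
def PureDescription (S : Type*) [Preorder S] : Prop :=
  {σ : S | PureState σ} = {σ : S | IsMax σ} ∧
    ∀ σ : S, ({α : S | PureState α ∧ σ ≤ α}).Nonempty ∧
      IsGLB {α : S | PureState α ∧ σ ≤ α} σ

/-- `S` is a simplex: every state is the infimum of exactly one nonempty set of
pure states. -/
def Simplex (S : Type*) [Preorder S] : Prop :=
  ∀ σ : S, ∃! U : Set S, U.Nonempty ∧ (∀ α ∈ U, PureState α) ∧ IsGLB U σ

/-- Distributivity of a meet-semilattice in Grätzer's sense. -/
def GDistrib (S : Type*) [SemilatticeInf S] : Prop :=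
  ∀ σ σ₁ σ₂ : S, σ ≠ σ₁ → σ ≠ σ₂ → σ₁ ⊓ σ₂ ≤ σ →
    ∃ σ₁' σ₂' : S, σ₁ ≤ σ₁' ∧ σ₂ ≤ σ₂' ∧ σ = σ₁' ⊓ σ₂'

/-- Two elements admit a common upper bound. -/
def UpperBounded {S : Type*} [Preorder S] (σ σ' : S) : Prop :=
  ∃ η : S, σ ≤ η ∧ σ' ≤ η

/-- The relation `σ ⋈̌ σ'`. -/
def Bowtie {S : Type*} [Preorder S] (σ σ' : S) : Prop :=
  ¬ UpperBounded σ σ' ∧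
    (∀ σ'' : S, σ'' < σ' → UpperBounded σ σ'') ∧
    (∀ σ'' : S, σ'' < σ → UpperBounded σ' σ'')

/-- `star` is an orthocomplementation of the space of states `S`. -/
structure IsOrtho {S : Type*} [PartialOrder S] [OrderBot S] (star : S → S) : Prop where
  ne_bot : ∀ σ : S, σ ≠ ⊥ → star σ ≠ ⊥
  invol : ∀ σ : S, σ ≠ ⊥ → star (star σ) = σ
  anti : ∀ σ τ : S, σ ≠ ⊥ → τ ≠ ⊥ → σ ≤ τ → star τ ≤ star σ
  bowtie : ∀ σ : S, σ ≠ ⊥ → Bowtie σ (star σ)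

/-! ## Effects -/

/-- A map `a : S → 𝔅` preserves infima of nonempty subsets. -/
def PreservesInf {S : Type*} [Preorder S] (a : S → BD) : Prop :=
  ∀ T : Set S, T.Nonempty → ∀ g : S, IsGLB T g → IsGLB (a '' T) (a g)

/-- An admissible effect space for a space of states `S`. -/
structure IsAdmissible {S : Type*} [SemilatticeInf S] [OrderBot S]
    (E : Set (S → BD)) : Prop where
  preserves : ∀ a ∈ E, PreservesInf a
  infClosed : ∀ F : Set (S → BD), F ⊆ E → F.Nonempty →
    ∀ f : S → BD, (∀ σ : S, IsGLB ((fun a => a σ) '' F) (f σ)) → f ∈ E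
  invClosed : ∀ a ∈ E, (fun σ => BD.inv (a σ)) ∈ E
  constY : (fun _ : S => BD.Y) ∈ E
  constBot : (fun _ : S => BD.bot) ∈ E
  separating : ∀ σ : S, σ ≠ ⊥ → ∃ σ' : S, σ' ≠ ⊥ ∧ ∃ a ∈ E,
    (∀ η : S, a η = BD.Y ↔ σ ≤ η) ∧ (∀ η : S, a η = BD.N ↔ σ' ≤ η)

/-- The type of effects belonging to an effect space `E`. -/
abbrev Eff {S : Type*} (E : Set (S → BD)) : Type _ := {a : S → BD // a ∈ E}

/-- The dual space `ℰ*` of an effect space. -/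
def EStar {S : Type*} [Preorder S] (E : Set (S → BD)) : Set (Eff E → BD) :=
  {ψ | (∀ F : Set (Eff E), F.Nonempty → ∀ f : Eff E,
      (∀ σ : S, IsGLB ((fun a : Eff E => a.1 σ) '' F) (f.1 σ)) → IsGLB (ψ '' F) (ψ f)) ∧
    (∀ a abar : Eff E, (∀ σ : S, abar.1 σ = BD.inv (a.1 σ)) → ψ abar = BD.inv (ψ a)) ∧
    (∀ y : Eff E, (∀ σ : S, y.1 σ = BD.Y) → ψ y = BD.Y)}

/-- A completely meet-irreducible (pure) element of an effect space `E`,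
with respect to the pointwise order. -/
def PureEffect {S : Type*} [Preorder S] (E : Set (S → BD)) (l : S → BD) : Prop :=
  l ∈ E ∧ ∀ F : Set (S → BD), F ⊆ E → F.Nonempty →
    (∀ σ : S, IsGLB ((fun a => a σ) '' F) (l σ)) → l ∈ F

/-- A maximal element of an effect space `E`, with respect to the pointwise order. -/
def MaxEffect {S : Type*} [Preorder S] (E : Set (S → BD)) (l : S → BD) : Prop :=
  l ∈ E ∧ ∀ l' ∈ E, l ≤ l' → l = l'

open Classical in
/-- The effect `𝔩_(σ,σ')`: value `Y` on the upper set of `σ`, `N` on the upper set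
of `σ'`, and `⊥` elsewhere. -/
noncomputable def ellEff {S : Type*} [Preorder S] (σ σ' : S) : S → BD :=
  fun η => if σ ≤ η then BD.Y else if σ' ≤ η then BD.N else BD.bot

/-- The reduced effect space `Ē_𝔖` of an orthocomplemented space of states. -/
def ReducedEffects {S : Type*} [SemilatticeInf S] [OrderBot S] (star : S → S) :
    Set (S → BD) :=
  {a | PreservesInf a ∧
    ∀ σ σ' : S, a ⁻¹' {BD.Y} = {η : S | σ ≤ η} → a ⁻¹' {BD.N} = {η : S | σ' ≤ η} →
      star σ ≤ σ'}

/-! ## Tensor products -/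

/-- The pure tensor `σ ⊗̃ τ`, as a map on pairs of effects. -/
def pureT {SA SB : Type*} (EA : Set (SA → BD)) (EB : Set (SB → BD))
    (σ : SA) (τ : SB) : Eff EA → Eff EB → BD :=
  fun a b => BD.prod (a.1 σ) (b.1 τ)

/-- The minimal tensor product: pointwise infima of nonempty families of pure tensors. -/
def MinTensor {SA SB : Type*} (EA : Set (SA → BD)) (EB : Set (SB → BD)) :
    Set (Eff EA → Eff EB → BD) :=
  {Φ | ∃ U : Set (SA × SB), U.Nonempty ∧
    ∀ (a : Eff EA) (b : Eff EB),
      IsGLB ((fun p : SA × SB => pureT EA EB p.1 p.2 a b) '' U) (Φ a b)}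

/-- The maximal tensor product `𝔖_A ⊗̌ 𝔖_B`. -/
def MaxTensor {SA SB : Type*} (EA : Set (SA → BD)) (EB : Set (SB → BD)) :
    Set (Eff EA → Eff EB → BD) :=
  {Φ |
    (∀ F : Set (Eff EA), F.Nonempty → ∀ f : Eff EA,
      (∀ σ : SA, IsGLB ((fun a : Eff EA => a.1 σ) '' F) (f.1 σ)) →
      ∀ b : Eff EB, IsGLB ((fun a : Eff EA => Φ a b) '' F) (Φ f b)) ∧
    (∀ G : Set (Eff EB), G.Nonempty → ∀ g : Eff EB,
      (∀ τ : SB, IsGLB ((fun b : Eff EB => b.1 τ) '' G) (g.1 τ)) →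
      ∀ a : Eff EA, IsGLB ((fun b : Eff EB => Φ a b) '' G) (Φ a g)) ∧
    (∀ a abar : Eff EA, ∀ yB : Eff EB,
      (∀ σ : SA, abar.1 σ = BD.inv (a.1 σ)) → (∀ τ : SB, yB.1 τ = BD.Y) →
      Φ abar yB = BD.inv (Φ a yB)) ∧
    (∀ b bbar : Eff EB, ∀ yA : Eff EA,
      (∀ τ : SB, bbar.1 τ = BD.inv (b.1 τ)) → (∀ σ : SA, yA.1 σ = BD.Y) →
      Φ yA bbar = BD.inv (Φ yA b)) ∧
    (∀ (yA : Eff EA) (yB : Eff EB),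
      (∀ σ : SA, yA.1 σ = BD.Y) → (∀ τ : SB, yB.1 τ = BD.Y) → Φ yA yB = BD.Y)}

/-- The regular tensor product `𝔖_A ⊗̂ 𝔖_B`. -/
def RegTensor {SA SB : Type*} (EA : Set (SA → BD)) (EB : Set (SB → BD)) :
    Set (Eff EA → Eff EB → BD) :=
  {Φ | Φ ∈ MaxTensor EA EB ∧
    (∀ (a : Eff EA) (nB : Eff EB), (∀ τ : SB, nB.1 τ = BD.N) → Φ a nB = BD.N) ∧
    (∀ (nA : Eff EA) (b : Eff EB), (∀ σ : SA, nA.1 σ = BD.N) → Φ nA b = BD.N) ∧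
    (∀ (a : Eff EA) (yB : Eff EB), (∀ τ : SB, yB.1 τ = BD.Y) → Φ a yB = BD.Y →
      ∀ (b bbar : Eff EB), (∀ τ : SB, bbar.1 τ = BD.inv (b.1 τ)) →
        (Φ a b = BD.Y ∧ Φ a bbar = BD.N) ∨ (Φ a b = BD.N ∧ Φ a bbar = BD.Y) ∨
          (Φ a b = BD.bot ∧ Φ a bbar = BD.bot)) ∧
    (∀ (b : Eff EB) (yA : Eff EA), (∀ σ : SA, yA.1 σ = BD.Y) → Φ yA b = BD.Y →
      ∀ (a abar : Eff EA), (∀ σ : SA, abar.1 σ = BD.inv (a.1 σ)) →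
        (Φ a b = BD.Y ∧ Φ abar b = BD.N) ∨ (Φ a b = BD.N ∧ Φ abar b = BD.Y) ∨
          (Φ a b = BD.bot ∧ Φ abar b = BD.bot)) ∧
    (∀ (a : Eff EA) (yB : Eff EB), (∀ τ : SB, yB.1 τ = BD.Y) → Φ a yB = BD.bot →
      ∀ (b b' : Eff EB), (∀ τ : SB, b.1 τ ⊓ b'.1 τ = BD.bot) →
        (Φ a b = BD.bot ∧ Φ a b' = BD.N) ∨ (Φ a b = BD.N ∧ Φ a b' = BD.bot) ∨
          (Φ a b = BD.bot ∧ Φ a b' = BD.bot)) ∧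
    (∀ (b : Eff EB) (yA : Eff EA), (∀ σ : SA, yA.1 σ = BD.Y) → Φ yA b = BD.bot →
      ∀ (a a' : Eff EA), (∀ σ : SA, a.1 σ ⊓ a'.1 σ = BD.bot) →
        (Φ a b = BD.bot ∧ Φ a' b = BD.N) ∨ (Φ a b = BD.N ∧ Φ a' b = BD.bot) ∨
          (Φ a b = BD.bot ∧ Φ a' b = BD.bot))}

/-- A completely meet-irreducible (pure) element of the minimal tensor product. -/
def PureInMin {SA SB : Type*} (EA : Set (SA → BD)) (EB : Set (SB → BD))
    (Φ : Eff EA → Eff EB → BD) : Prop :=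
  Φ ∈ MinTensor EA EB ∧
    ∀ F : Set (Eff EA → Eff EB → BD), F ⊆ MinTensor EA EB → F.Nonempty →
      (∀ (a : Eff EA) (b : Eff EB),
        IsGLB ((fun Ψ : Eff EA → Eff EB → BD => Ψ a b) '' F) (Φ a b)) → Φ ∈ F

/-- A bi-filter of `𝔖_A × 𝔖_B`. -/
def BiFilter {SA SB : Type*} [SemilatticeInf SA] [SemilatticeInf SB]
    (R : Set (SA × SB)) : Prop :=
  R.Nonempty ∧
    (∀ p q : SA × SB, p.1 ≤ q.1 → p.2 ≤ q.2 → p ∈ R → q ∈ R) ∧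
    (∀ (σ₁ σ₂ : SA) (τ : SB), (σ₁, τ) ∈ R → (σ₂, τ) ∈ R → (σ₁ ⊓ σ₂, τ) ∈ R) ∧
    (∀ (σ : SA) (τ₁ τ₂ : SB), (σ, τ₁) ∈ R → (σ, τ₂) ∈ R → (σ, τ₁ ⊓ τ₂) ∈ R)

/-- The bi-filter `𝔉̃` determined by a finite nonempty family of pure tensors. -/
def Ftilde {SA SB : Type*} (EA : Set (SA → BD)) (EB : Set (SB → BD))
    {ι : Type*} [Fintype ι] [Nonempty ι] (σ : ι → SA) (τ : ι → SB) :
    Set (SA × SB) :=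
  {p | ∀ (a : Eff EA) (b : Eff EB),
    Finset.univ.inf' Finset.univ_nonempty
      (fun i => pureT EA EB (σ i) (τ i) a b) ≤ pureT EA EB p.1 p.2 a b}

/-! ## Auxiliary lemmas -/

namespace BD

lemma le_def' {u v : BD} : u ≤ v ↔ u = BD.bot ∨ u = v := Iff.rfl

@[simp] lemma bot_le' (v : BD) : BD.bot ≤ v := Or.inl rfl

lemma N_le_iff {v : BD} : BD.N ≤ v ↔ v = BD.N := by
  constructor
  · rintro (h | h) <;> simp_all
  · rintro rfl; exact le_refl _

lemma Y_le_iff {v : BD} : BD.Y ≤ v ↔ v = BD.Y := by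
  constructor
  · rintro (h | h) <;> simp_all
  · rintro rfl; exact le_refl _

lemma prod_eq_N {x y : BD} : BD.prod x y = BD.N ↔ x = BD.N ∨ y = BD.N := by
  cases x <;> cases y <;> simp [BD.prod]

lemma prod_eq_Y {x y : BD} : BD.prod x y = BD.Y ↔ x = BD.Y ∧ y = BD.Y := by
  cases x <;> cases y <;> simp [BD.prod]

lemma inv_inv (x : BD) : BD.inv (BD.inv x) = x := by cases x <;> rfl

lemma inv_eq_Y {x : BD} : BD.inv x = BD.Y ↔ x = BD.N := by cases x <;> simp [BD.inv]

lemma inv_eq_N {x : BD} : BD.inv x = BD.N ↔ x = BD.Y := by cases x <;> simp [BD.inv]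

lemma inv_eq_bot {x : BD} : BD.inv x = BD.bot ↔ x = BD.bot := by cases x <;> simp [BD.inv]

end BD

section GLB

variable {α : Type*}

lemma isGLB_allY {T : Set α} {f : α → BD} (hne : T.Nonempty)
    (h : ∀ t ∈ T, f t = BD.Y) : IsGLB (f '' T) BD.Y := by
  constructor
  · rintro b ⟨t, ht, rfl⟩
    rw [h t ht]
  · intro b hb
    obtain ⟨t0, ht0⟩ := hne
    have := hb ⟨t0, ht0, rfl⟩
    rw [h t0 ht0] at this
    exact this

lemma isGLB_allN {T : Set α} {f : α → BD} (hne : T.Nonempty)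
    (h : ∀ t ∈ T, f t = BD.N) : IsGLB (f '' T) BD.N := by
  constructor
  · rintro b ⟨t, ht, rfl⟩
    rw [h t ht]
  · intro b hb
    obtain ⟨t0, ht0⟩ := hne
    have := hb ⟨t0, ht0, rfl⟩
    rw [h t0 ht0] at this
    exact this

lemma isGLB_mixed {T : Set α} {f : α → BD}
    (hY : ¬ ∀ t ∈ T, f t = BD.Y) (hN : ¬ ∀ t ∈ T, f t = BD.N) :
    IsGLB (f '' T) BD.bot := by
  constructor
  · rintro b ⟨t, _, rfl⟩
    exact BD.bot_le' _
  · intro b hb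
    cases hb' : b with
    | bot => exact le_refl _
    | Y =>
      exfalso; apply hY
      intro t ht
      have := hb ⟨t, ht, rfl⟩
      rw [hb'] at this
      exact (BD.Y_le_iff.mp this)
    | N =>
      exfalso; apply hN
      intro t ht
      have := hb ⟨t, ht, rfl⟩
      rw [hb'] at this
      exact (BD.N_le_iff.mp this)

lemma isGLB_image_eq_Y_iff {T : Set α} {f : α → BD} {v : BD} (hne : T.Nonempty)
    (hglb : IsGLB (f '' T) v) : v = BD.Y ↔ ∀ t ∈ T, f t = BD.Y := by
  constructor
  · rintro rfl t ht
    have := hglb.1 ⟨t, ht, rfl⟩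
    exact (BD.Y_le_iff.mp this).symm ▸ rfl
  · intro h
    exact hglb.unique (isGLB_allY hne h)

lemma isGLB_image_eq_N_iff {T : Set α} {f : α → BD} {v : BD} (hne : T.Nonempty)
    (hglb : IsGLB (f '' T) v) : v = BD.N ↔ ∀ t ∈ T, f t = BD.N := by
  constructor
  · rintro rfl t ht
    have := hglb.1 ⟨t, ht, rfl⟩
    exact (BD.N_le_iff.mp this).symm ▸ rfl
  · intro h
    exact hglb.unique (isGLB_allN hne h)

/-- Build an `IsGLB` statement from value characterizations. -/
lemma isGLB_image_of_iff {T : Set α} {f : α → BD} {v : BD} (hne : T.Nonempty)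
    (hY : v = BD.Y ↔ ∀ t ∈ T, f t = BD.Y)
    (hN : v = BD.N ↔ ∀ t ∈ T, f t = BD.N) : IsGLB (f '' T) v := by
  cases hv : v with
  | Y => exact isGLB_allY hne (hY.mp hv)
  | N => exact isGLB_allN hne (hN.mp hv)
  | bot =>
    apply isGLB_mixed
    · intro h
      rw [hY.mpr h] at hv; exact BD.noConfusion hv
    · intro h
      rw [hN.mpr h] at hv; exact BD.noConfusion hv

end GLB

section Effects

variable {S : Type*} [SemilatticeInf S] [OrderBot S]

lemma monotone_of_preservesInf {a : S → BD} (ha : PreservesInf a) : Monotone a := by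
  intro x y hxy
  have hglb : IsGLB {x, y} x := by
    constructor
    · rintro t (rfl | rfl)
      · exact le_refl _
      · exact hxy
    · intro b hb
      exact hb (Set.mem_insert _ _)
  have := ha {x, y} ⟨x, Set.mem_insert _ _⟩ x hglb
  exact this.1 ⟨y, by simp, rfl⟩

lemma effect_monotone {star : S → S} {a : S → BD} (ha : a ∈ ReducedEffects star) :
    Monotone a := monotone_of_preservesInf ha.1

/-- If an effect is `N` at two points, it is `N` at their meet. -/
lemma effect_inf_N {star : S → S} {a : S → BD} (ha : a ∈ ReducedEffects star)
    {x y : S} (hx : a x = BD.N) (hy : a y = BD.N) : a (x ⊓ y) = BD.N := by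
  have hglb : IsGLB {x, y} (x ⊓ y) := isGLB_pair
  have h2 := ha.1 {x, y} ⟨x, Set.mem_insert _ _⟩ (x ⊓ y) hglb
  rw [isGLB_image_eq_N_iff ⟨x, Set.mem_insert _ _⟩ h2]
  rintro t (rfl | rfl)
  · exact hx
  · exact hy

open Classical in
/-- The effect which is `N` on the up-set of `η` and `⊥` elsewhere. -/
noncomputable def nEff (η : S) : S → BD := fun σ => if η ≤ σ then BD.N else BD.bot

lemma nEff_apply_of_le {η σ : S} (h : η ≤ σ) : nEff η σ = BD.N := by simp [nEff, h]

lemma nEff_apply_of_not_le {η σ : S} (h : ¬ η ≤ σ) : nEff η σ = BD.bot := by simp [nEff, h]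

lemma nEff_eq_N_iff {η σ : S} : nEff η σ = BD.N ↔ η ≤ σ := by
  by_cases h : η ≤ σ <;> simp [nEff, h]

lemma nEff_ne_Y (η σ : S) : nEff η σ ≠ BD.Y := by
  by_cases h : η ≤ σ <;> simp [nEff, h]

lemma nEff_mem (star : S → S) (η : S) : nEff η ∈ ReducedEffects star := by
  constructor
  · intro T hT g hglb
    by_cases h : η ≤ g
    · rw [show nEff η g = BD.N from nEff_apply_of_le h]
      apply isGLB_allN (f := nEff η) hT
      intro t ht
      exact nEff_apply_of_le (h.trans (hglb.1 ht))
    · have h2 : ¬ ∀ t ∈ T, nEff η t = BD.N := by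
        intro hall
        apply h
        apply hglb.2
        intro t ht
        exact nEff_eq_N_iff.mp (hall t ht)
      have h1 : ¬ ∀ t ∈ T, nEff η t = BD.Y := by
        obtain ⟨t0, ht0⟩ := hT
        intro hall
        exact nEff_ne_Y η t0 (hall t0 ht0)
      rw [show nEff η g = BD.bot from nEff_apply_of_not_le h]
      exact isGLB_mixed h1 h2
  · intro σ σ' h1 _
    exfalso
    have : σ ∈ nEff η ⁻¹' {BD.Y} := by rw [h1]; exact le_refl σ
    exact nEff_ne_Y η σ this

lemma constY_mem (star : S → S) : (fun _ : S => BD.Y) ∈ ReducedEffects star := by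
  constructor
  · intro T hT g _
    exact isGLB_allY hT (fun t _ => rfl)
  · intro σ σ' _ h2
    exfalso
    have : σ' ∈ (fun _ : S => BD.Y) ⁻¹' {BD.N} := by rw [h2]; exact le_refl σ'
    exact BD.noConfusion this

end Effects

section Triple

variable {S : Type*} [SemilatticeInf S] [OrderBot S]

/-- A triple of pairwise "complementary" states with equal pairwise meets. -/
def IsTriple (σ₀ c₁ c₂ c₃ : S) : Prop :=
  c₁ ⊓ c₂ = σ₀ ∧ c₁ ⊓ c₃ = σ₀ ∧ c₂ ⊓ c₃ = σ₀ ∧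
    ¬ UpperBounded c₁ c₂ ∧ ¬ UpperBounded c₁ c₃ ∧ ¬ UpperBounded c₂ c₃

lemma triple_ne {σ₀ c₁ c₂ c₃ : S} (h : IsTriple σ₀ c₁ c₂ c₃) :
    σ₀ ≠ c₁ ∧ σ₀ ≠ c₂ ∧ σ₀ ≠ c₃ := by
  obtain ⟨h12, h13, h23, n12, n13, n23⟩ := h
  refine ⟨?_, ?_, ?_⟩
  · rintro rfl
    exact n12 ⟨c₂, by rw [← h12]; exact inf_le_right, le_refl _⟩
  · rintro rfl
    exact n12 ⟨c₁, le_refl _, by rw [← h12]; exact inf_le_left⟩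
  · rintro rfl
    exact n13 ⟨c₁, le_refl _, by rw [← h13]; exact inf_le_left⟩

lemma triple_le {σ₀ c₁ c₂ c₃ : S} (h : IsTriple σ₀ c₁ c₂ c₃) :
    σ₀ ≤ c₁ ∧ σ₀ ≤ c₂ ∧ σ₀ ≤ c₃ := by
  obtain ⟨h12, h13, h23, _, _, _⟩ := h
  exact ⟨by rw [← h12]; exact inf_le_left, by rw [← h12]; exact inf_le_right,
    by rw [← h13]; exact inf_le_right⟩

/-- Two distinct maximal elements have no upper bound. -/
lemma noUB_of_max {x y : S} (hx : IsMax x) (hy : IsMax y) (hxy : x ≠ y) :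
    ¬ UpperBounded x y := by
  rintro ⟨ξ, hxξ, hyξ⟩
  exact hxy (le_antisymm (hxξ.trans (hy hyξ)) (hyξ.trans (hx hxξ)))

variable {star : S → S}

theorem exists_triple (hdc : DownComplete S) (hpd : PureDescription S)
    (ho : IsOrtho star) (hns : ¬ Simplex S) :
    ∃ σ₀ c₁ c₂ c₃ : S, IsTriple σ₀ c₁ c₂ c₃ := by
  have hmax : ∀ σ : S, PureState σ ↔ IsMax σ := fun σ => Set.ext_iff.mp hpd.1 σ
  -- Step 1: find two distinct non-adjacent pure states
  have step1 : ∃ x y : S, IsMax x ∧ IsMax y ∧ x ≠ y ∧ x ≠ ⊥ ∧ y ≠ ⊥ ∧ ¬ star x ≤ y := by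
    by_contra hcon
    push_neg at hcon
    have hex : ∃ σ : S, ¬ ∃! U : Set S,
        U.Nonempty ∧ (∀ α ∈ U, PureState α) ∧ IsGLB U σ := by
      by_contra hc
      push_neg at hc
      exact hns fun σ => hc σ
    obtain ⟨σ, hσ⟩ := hex
    set V : Set S := {α : S | PureState α ∧ σ ≤ α} with hV
    have hVprop : V.Nonempty ∧ (∀ α ∈ V, PureState α) ∧ IsGLB V σ :=
      ⟨(hpd.2 σ).1, fun α hα => hα.1, (hpd.2 σ).2⟩
    have hU : ∃ U : Set S,
        (U.Nonempty ∧ (∀ α ∈ U, PureState α) ∧ IsGLB U σ) ∧ U ≠ V := by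
      by_contra hc
      push_neg at hc
      exact hσ ⟨V, hVprop, fun U hU => hc U hU⟩
    obtain ⟨U, ⟨hUne, hUpure, hUglb⟩, hUneq⟩ := hU
    have hUsub : U ⊆ V := fun α hα => ⟨hUpure α hα, hUglb.1 hα⟩
    obtain ⟨α, hαV, hαU⟩ : ∃ α, α ∈ V ∧ α ∉ U := by
      by_contra hc
      push_neg at hc
      exact hUneq (Set.Subset.antisymm hUsub (fun α hα => hc α hα))
    obtain ⟨γ, hγU⟩ := hUne
    have hαmax : IsMax α := (hmax α).mp hαV.1
    have hαγ : γ ≠ α := fun h => hαU (h ▸ hγU)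
    have hαbot : α ≠ ⊥ := by
      rintro rfl
      exact hαγ (le_antisymm (hαmax bot_le) bot_le)
    have hlb : star α ∈ lowerBounds U := by
      intro γ' hγ'
      have hγ'max : IsMax γ' := (hmax γ').mp (hUpure γ' hγ')
      have hne : α ≠ γ' := fun h => hαU (h ▸ hγ')
      have hγ'bot : γ' ≠ ⊥ := by
        rintro rfl
        exact hne (le_antisymm (hγ'max bot_le) bot_le)
      exact hcon α γ' hαmax hγ'max hne hαbot hγ'bot
    exact (ho.bowtie α hαbot).1 ⟨α, le_refl α, (hUglb.2 hlb).trans hαV.2⟩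
  obtain ⟨x, y, hxmax, hymax, hxy, hxbot, hybot, hnadj⟩ := step1
  have hxs_bot : star x ≠ ⊥ := ho.ne_bot x hxbot
  -- star x is an atom
  have hatom : ∀ η : S, η ≤ star x → η ≠ ⊥ → η = star x := by
    intro η hη hηbot
    have h1 : star (star x) ≤ star η := ho.anti η (star x) hηbot hxs_bot hη
    rw [ho.invol x hxbot] at h1
    have h2 : star η ≤ x := hxmax h1
    have h4 : star (star η) = star x := by rw [le_antisymm h1 h2]
    rw [ho.invol η hηbot] at h4
    exact h4
  have hxsx : x ⊓ star x = ⊥ := by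
    by_contra h
    have h1 : x ⊓ star x = star x := hatom _ inf_le_right h
    exact (ho.bowtie x hxbot).1 ⟨x, le_refl x, by rw [← h1]; exact inf_le_left⟩
  by_cases hbot : x ⊓ y = ⊥
  · -- Case A: triple (⊥; x, y, star x)
    refine ⟨⊥, x, y, star x, hbot, hxsx, ?_, noUB_of_max hxmax hymax hxy,
      (ho.bowtie x hxbot).1, ?_⟩
    · by_contra h
      have h1 : y ⊓ star x = star x := hatom _ inf_le_right h
      exact hnadj (by rw [← h1]; exact inf_le_left)
    · rintro ⟨ξ, hyξ, hsξ⟩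
      exact hnadj (hsξ.trans (hymax hyξ))
  · -- Case B
    set s := x ⊓ y with hs
    have hsx : s ≤ x := inf_le_left
    have hsy : s ≤ y := inf_le_right
    have hsltx : s ≠ x := by
      intro h
      exact hxy (le_antisymm (h ▸ hsy) (hxmax (h ▸ hsy)))
    have hpure_bot : ∀ p : S, s ≤ p → p ≠ ⊥ := by
      intro p hp hpb
      exact hbot (le_antisymm (hpb ▸ hp) bot_le)
    have hsbot : s ≠ ⊥ := hpure_bot s (le_refl s)
    set M : Set S := {p : S | PureState p ∧ s ≤ p ∧ star p ≤ x} with hM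
    -- M is nonempty
    have hMne : M.Nonempty := by
      obtain ⟨ξ, hξ1, hξ2⟩ := (ho.bowtie x hxbot).2.2 s (lt_of_le_of_ne hsx hsltx)
      obtain ⟨p, hp⟩ := (hpd.2 ξ).1
      have hpb : p ≠ ⊥ := hpure_bot p (hξ2.trans hp.2)
      refine ⟨p, hp.1, hξ2.trans hp.2, ?_⟩
      have h1 := ho.anti (star x) p hxs_bot hpb (hξ1.trans hp.2)
      rwa [ho.invol x hxbot] at h1
    obtain ⟨z, hz⟩ := hdc M hMne
    have hsz : s ≤ z := hz.2 (fun p hp => hp.2.1)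
    have hsxz : star x ≤ z := by
      apply hz.2
      intro p hp
      have hpb : p ≠ ⊥ := hpure_bot p hp.2.1
      have h1 := ho.anti (star p) x (ho.ne_bot p hpb) hxbot hp.2.2
      rwa [ho.invol p hpb] at h1
    have hzs : z ≠ s := by
      intro h
      exact (ho.bowtie x hxbot).1 ⟨x, le_refl x, (h ▸ hsxz).trans hsx⟩
    -- density engine
    have density : ∀ h : S, s ≤ h → h ≠ s →
        ∃ ρ : S, PureState ρ ∧ s ≤ ρ ∧ ρ ≠ ⊥ ∧ star ρ ≤ h := by
      intro h hsh hhs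
      have hhbot : h ≠ ⊥ := hpure_bot h hsh
      obtain ⟨ξ, hξ1, hξ2⟩ := (ho.bowtie h hhbot).2.2 s (lt_of_le_of_ne hsh (Ne.symm hhs))
      obtain ⟨ρ, hρ⟩ := (hpd.2 ξ).1
      have hρb : ρ ≠ ⊥ := hpure_bot ρ (hξ2.trans hρ.2)
      refine ⟨ρ, hρ.1, hξ2.trans hρ.2, hρb, ?_⟩
      have h1 := ho.anti (star h) ρ (ho.ne_bot h hhbot) hρb (hξ1.trans hρ.2)
      rwa [ho.invol h hhbot] at h1
    -- B3 : x ⊓ z = s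
    have hxz : x ⊓ z = s := by
      have hsh : s ≤ x ⊓ z := le_inf hsx hsz
      by_contra hne
      obtain ⟨ρ, hρpure, hρs, hρb, hρst⟩ := density (x ⊓ z) hsh (fun h => hne h)
      have hρM : ρ ∈ M := ⟨hρpure, hρs, hρst.trans inf_le_left⟩
      exact (ho.bowtie ρ hρb).1
        ⟨ρ, le_refl ρ, (hρst.trans inf_le_right).trans (hz.1 hρM)⟩
    -- B4 : y ⊓ z = s
    have hyz : y ⊓ z = s := by
      have hsh : s ≤ y ⊓ z := le_inf hsy hsz
      by_contra hne
      obtain ⟨ρ, hρpure, hρs, hρb, hρst⟩ := density (y ⊓ z) hsh (fun h => hne h)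
      set u := star s with hu
      set g := z ⊓ u with hg
      have hsρu : star ρ ≤ u := ho.anti s ρ hsbot hρb hρs
      have hsρg : star ρ ≤ g := le_inf (hρst.trans inf_le_right) hsρu
      have hgbot : g ≠ ⊥ := by
        intro h
        exact ho.ne_bot ρ hρb (le_antisymm (h ▸ hsρg) bot_le)
      set j := star g with hj
      have hjρ : j ≤ ρ := by
        have h1 := ho.anti (star ρ) g (ho.ne_bot ρ hρb) hgbot hsρg
        rwa [ho.invol ρ hρb] at h1
      have hsxg : star x ≤ g :=
        le_inf hsxz (ho.anti s x hsbot hxbot hsx)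
      have hjx : j ≤ x := by
        have h1 := ho.anti (star x) g hxs_bot hgbot hsxg
        rwa [ho.invol x hxbot] at h1
      have hsj : s ≤ j := by
        have h1 := ho.anti g u hgbot (ho.ne_bot s hsbot) inf_le_right
        have h2 : star u = s := ho.invol s hsbot
        rwa [h2] at h1
      have hjeqx : j = x := by
        by_contra hjnex
        obtain ⟨ξ, hξ1, hξ2⟩ := (ho.bowtie x hxbot).2.2 j (lt_of_le_of_ne hjx hjnex)
        obtain ⟨π, hπ⟩ := (hpd.2 ξ).1
        have hπb : π ≠ ⊥ := hpure_bot π ((hsj.trans hξ2).trans hπ.2)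
        have hπM : π ∈ M := by
          refine ⟨hπ.1, (hsj.trans hξ2).trans hπ.2, ?_⟩
          have h1 := ho.anti (star x) π hxs_bot hπb (hξ1.trans hπ.2)
          rwa [ho.invol x hxbot] at h1
        have hsπg : star π ≤ g := by
          have h1 := ho.anti j π (ho.ne_bot g hgbot) hπb (hξ2.trans hπ.2)
          have h2 : star j = g := ho.invol g hgbot
          rwa [h2] at h1
        exact (ho.bowtie π hπb).1
          ⟨π, le_refl π, (hsπg.trans inf_le_left).trans (hz.1 hπM)⟩
      have hρx : ρ = x := le_antisymm (hxmax (hjeqx ▸ hjρ)) (hjeqx ▸ hjρ)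
      exact hnadj ((hρx ▸ hρst).trans inf_le_left)
    refine ⟨s, x, y, z, rfl, hxz, hyz, noUB_of_max hxmax hymax hxy, ?_, ?_⟩
    · rintro ⟨ξ, h1, h2⟩
      have hzx : z ≤ x := h2.trans (hxmax h1)
      have h3 : x ⊓ z = z := inf_of_le_right hzx
      exact hzs (by rw [← h3, hxz])
    · rintro ⟨ξ, h1, h2⟩
      have hzy : z ≤ y := h2.trans (hymax h1)
      have h3 : y ⊓ z = z := inf_of_le_right hzy
      exact hzs (by rw [← h3, hyz])

end Triple

section MinSubReg

variable {SA SB : Type*} (EA : Set (SA → BD)) (EB : Set (SB → BD))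

lemma pureT_eq_Y {σ : SA} {τ : SB} {a : Eff EA} {b : Eff EB} :
    pureT EA EB σ τ a b = BD.Y ↔ a.1 σ = BD.Y ∧ b.1 τ = BD.Y := BD.prod_eq_Y

lemma pureT_eq_N {σ : SA} {τ : SB} {a : Eff EA} {b : Eff EB} :
    pureT EA EB σ τ a b = BD.N ↔ a.1 σ = BD.N ∨ b.1 τ = BD.N := BD.prod_eq_N

theorem min_subset_reg : MinTensor EA EB ⊆ RegTensor EA EB := by
  rintro Φ ⟨U, hUne, hglb⟩
  -- value characterizations
  have hY : ∀ (a : Eff EA) (b : Eff EB),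
      Φ a b = BD.Y ↔ ∀ p ∈ U, a.1 p.1 = BD.Y ∧ b.1 p.2 = BD.Y := by
    intro a b
    rw [isGLB_image_eq_Y_iff hUne (hglb a b)]
    constructor
    · intro h p hp; exact pureT_eq_Y EA EB |>.mp (h p hp)
    · intro h p hp; exact pureT_eq_Y EA EB |>.mpr (h p hp)
  have hN : ∀ (a : Eff EA) (b : Eff EB),
      Φ a b = BD.N ↔ ∀ p ∈ U, a.1 p.1 = BD.N ∨ b.1 p.2 = BD.N := by
    intro a b
    rw [isGLB_image_eq_N_iff hUne (hglb a b)]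
    constructor
    · intro h p hp; exact pureT_eq_N EA EB |>.mp (h p hp)
    · intro h p hp; exact pureT_eq_N EA EB |>.mpr (h p hp)
  refine ⟨⟨?_, ?_, ?_, ?_, ?_⟩, ?_, ?_, ?_, ?_, ?_, ?_⟩
  · -- (i) infima in the first variable
    intro F hFne f hf b
    have hfY : ∀ σ, f.1 σ = BD.Y ↔ ∀ a ∈ F, a.1 σ = BD.Y :=
      fun σ => isGLB_image_eq_Y_iff hFne (hf σ)
    have hfN : ∀ σ, f.1 σ = BD.N ↔ ∀ a ∈ F, a.1 σ = BD.N :=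
      fun σ => isGLB_image_eq_N_iff hFne (hf σ)
    apply isGLB_image_of_iff hFne
    · rw [hY]
      constructor
      · intro h a ha
        rw [hY]
        intro p hp
        exact ⟨(hfY p.1).mp (h p hp).1 a ha, (h p hp).2⟩
      · intro h p hp
        obtain ⟨a0, ha0⟩ := hFne
        refine ⟨(hfY p.1).mpr (fun a ha => ((hY a b).mp (h a ha) p hp).1),
          ((hY a0 b).mp (h a0 ha0) p hp).2⟩
    · rw [hN]
      constructor
      · intro h a ha
        rw [hN]
        intro p hp
        rcases h p hp with h1 | h1
        · exact Or.inl ((hfN p.1).mp h1 a ha)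
        · exact Or.inr h1
      · intro h p hp
        by_cases hb : b.1 p.2 = BD.N
        · exact Or.inr hb
        · refine Or.inl ((hfN p.1).mpr (fun a ha => ?_))
          rcases (hN a b).mp (h a ha) p hp with h1 | h1
          · exact h1
          · exact absurd h1 hb
  · -- (ii) infima in the second variable
    intro G hGne g hg a
    have hgY : ∀ τ, g.1 τ = BD.Y ↔ ∀ b ∈ G, b.1 τ = BD.Y :=
      fun τ => isGLB_image_eq_Y_iff hGne (hg τ)
    have hgN : ∀ τ, g.1 τ = BD.N ↔ ∀ b ∈ G, b.1 τ = BD.N :=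
      fun τ => isGLB_image_eq_N_iff hGne (hg τ)
    apply isGLB_image_of_iff hGne
    · rw [hY]
      constructor
      · intro h b hb
        rw [hY]
        intro p hp
        exact ⟨(h p hp).1, (hgY p.2).mp (h p hp).2 b hb⟩
      · intro h p hp
        obtain ⟨b0, hb0⟩ := hGne
        exact ⟨((hY a b0).mp (h b0 hb0) p hp).1,
          (hgY p.2).mpr (fun b hb => ((hY a b).mp (h b hb) p hp).2)⟩
    · rw [hN]
      constructor
      · intro h b hb
        rw [hN]
        intro p hp
        rcases h p hp with h1 | h1
        · exact Or.inl h1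
        · exact Or.inr ((hgN p.2).mp h1 b hb)
      · intro h p hp
        by_cases ha : a.1 p.1 = BD.N
        · exact Or.inl ha
        · refine Or.inr ((hgN p.2).mpr (fun b hb => ?_))
          rcases (hN a b).mp (h b hb) p hp with h1 | h1
          · exact absurd h1 ha
          · exact h1
  · -- (iii) involution in the first variable
    intro a abar yB hbar hyB
    cases hv : Φ a yB with
    | Y =>
      rw [show BD.inv BD.Y = BD.N from rfl, hN]
      intro p hp
      refine Or.inl ?_
      rw [hbar p.1, ((hY a yB).mp hv p hp).1]
      rfl
    | N =>
      rw [show BD.inv BD.N = BD.Y from rfl, hY]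
      intro p hp
      have h1 : a.1 p.1 = BD.N := by
        rcases (hN a yB).mp hv p hp with h1 | h1
        · exact h1
        · rw [hyB p.2] at h1; exact absurd h1 (by simp)
      refine ⟨by rw [hbar p.1, h1]; rfl, hyB p.2⟩
    | bot =>
      rw [show BD.inv BD.bot = BD.bot from rfl]
      cases hw : Φ abar yB with
      | Y =>
        exfalso
        have h1 : ∀ p ∈ U, a.1 p.1 = BD.N := by
          intro p hp
          have := ((hY abar yB).mp hw p hp).1
          rw [hbar p.1] at this
          exact BD.inv_eq_Y.mp this
        have : Φ a yB = BD.N := (hN a yB).mpr (fun p hp => Or.inl (h1 p hp))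
        rw [hv] at this; exact BD.noConfusion this
      | N =>
        exfalso
        have h1 : ∀ p ∈ U, a.1 p.1 = BD.Y := by
          intro p hp
          rcases (hN abar yB).mp hw p hp with h1 | h1
          · rw [hbar p.1] at h1; exact BD.inv_eq_N.mp h1
          · rw [hyB p.2] at h1; exact absurd h1 (by simp)
        have : Φ a yB = BD.Y := (hY a yB).mpr (fun p hp => ⟨h1 p hp, hyB p.2⟩)
        rw [hv] at this; exact BD.noConfusion this
      | bot => rfl
  · -- (iv) involution in the second variable
    intro b bbar yA hbar hyA
    cases hv : Φ yA b with
    | Y =>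
      rw [show BD.inv BD.Y = BD.N from rfl, hN]
      intro p hp
      refine Or.inr ?_
      rw [hbar p.2, ((hY yA b).mp hv p hp).2]
      rfl
    | N =>
      rw [show BD.inv BD.N = BD.Y from rfl, hY]
      intro p hp
      have h1 : b.1 p.2 = BD.N := by
        rcases (hN yA b).mp hv p hp with h1 | h1
        · rw [hyA p.1] at h1; exact absurd h1 (by simp)
        · exact h1
      refine ⟨hyA p.1, by rw [hbar p.2, h1]; rfl⟩
    | bot =>
      rw [show BD.inv BD.bot = BD.bot from rfl]
      cases hw : Φ yA bbar with
      | Y =>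
        exfalso
        have h1 : ∀ p ∈ U, b.1 p.2 = BD.N := by
          intro p hp
          have := ((hY yA bbar).mp hw p hp).2
          rw [hbar p.2] at this
          exact BD.inv_eq_Y.mp this
        have : Φ yA b = BD.N := (hN yA b).mpr (fun p hp => Or.inr (h1 p hp))
        rw [hv] at this; exact BD.noConfusion this
      | N =>
        exfalso
        have h1 : ∀ p ∈ U, b.1 p.2 = BD.Y := by
          intro p hp
          rcases (hN yA bbar).mp hw p hp with h1 | h1
          · rw [hyA p.1] at h1; exact absurd h1 (by simp)
          · rw [hbar p.2] at h1; exact BD.inv_eq_N.mp h1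
        have : Φ yA b = BD.Y := (hY yA b).mpr (fun p hp => ⟨hyA p.1, h1 p hp⟩)
        rw [hv] at this; exact BD.noConfusion this
      | bot => rfl
  · -- (v) normalization
    intro yA yB hyA hyB
    exact (hY yA yB).mpr (fun p hp => ⟨hyA p.1, hyB p.2⟩)
  · -- reg 1
    intro a nB hnB
    exact (hN a nB).mpr (fun p hp => Or.inr (hnB p.2))
  · -- reg 2
    intro nA b hnA
    exact (hN nA b).mpr (fun p hp => Or.inl (hnA p.1))
  · -- reg 3
    intro a yB hyB hval b bbar hbar
    have haY : ∀ p ∈ U, a.1 p.1 = BD.Y := fun p hp => ((hY a yB).mp hval p hp).1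
    by_cases hbY : ∀ p ∈ U, b.1 p.2 = BD.Y
    · refine Or.inl ⟨(hY a b).mpr (fun p hp => ⟨haY p hp, hbY p hp⟩),
        (hN a bbar).mpr (fun p hp => Or.inr ?_)⟩
      rw [hbar p.2, hbY p hp]; rfl
    · by_cases hbN : ∀ p ∈ U, b.1 p.2 = BD.N
      · refine Or.inr (Or.inl ⟨(hN a b).mpr (fun p hp => Or.inr (hbN p hp)),
          (hY a bbar).mpr (fun p hp => ⟨haY p hp, ?_⟩)⟩)
        rw [hbar p.2, hbN p hp]; rfl
      · refine Or.inr (Or.inr ⟨?_, ?_⟩)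
        · cases hv : Φ a b with
          | Y => exact absurd (fun p hp => ((hY a b).mp hv p hp).2) hbY
          | N =>
            exfalso; apply hbN
            intro p hp
            rcases (hN a b).mp hv p hp with h1 | h1
            · rw [haY p hp] at h1; exact absurd h1 (by simp)
            · exact h1
          | bot => rfl
        · cases hv : Φ a bbar with
          | Y =>
            exfalso; apply hbN
            intro p hp
            have := ((hY a bbar).mp hv p hp).2
            rw [hbar p.2] at this
            exact BD.inv_eq_Y.mp this
          | N =>
            exfalso; apply hbY
            intro p hp
            rcases (hN a bbar).mp hv p hp with h1 | h1
            · rw [haY p hp] at h1; exact absurd h1 (by simp)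
            · rw [hbar p.2] at h1; exact BD.inv_eq_N.mp h1
          | bot => rfl
  · -- reg 4
    intro b yA hyA hval a abar hbar
    have hbY : ∀ p ∈ U, b.1 p.2 = BD.Y := fun p hp => ((hY yA b).mp hval p hp).2
    by_cases haY : ∀ p ∈ U, a.1 p.1 = BD.Y
    · refine Or.inl ⟨(hY a b).mpr (fun p hp => ⟨haY p hp, hbY p hp⟩),
        (hN abar b).mpr (fun p hp => Or.inl ?_)⟩
      rw [hbar p.1, haY p hp]; rfl
    · by_cases haN : ∀ p ∈ U, a.1 p.1 = BD.N
      · refine Or.inr (Or.inl ⟨(hN a b).mpr (fun p hp => Or.inl (haN p hp)),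
          (hY abar b).mpr (fun p hp => ⟨?_, hbY p hp⟩)⟩)
        rw [hbar p.1, haN p hp]; rfl
      · refine Or.inr (Or.inr ⟨?_, ?_⟩)
        · cases hv : Φ a b with
          | Y => exact absurd (fun p hp => ((hY a b).mp hv p hp).1) haY
          | N =>
            exfalso; apply haN
            intro p hp
            rcases (hN a b).mp hv p hp with h1 | h1
            · exact h1
            · rw [hbY p hp] at h1; exact absurd h1 (by simp)
          | bot => rfl
        · cases hv : Φ abar b with
          | Y =>
            exfalso; apply haN
            intro p hp
            have := ((hY abar b).mp hv p hp).1
            rw [hbar p.1] at this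
            exact BD.inv_eq_Y.mp this
          | N =>
            exfalso; apply haY
            intro p hp
            rcases (hN abar b).mp hv p hp with h1 | h1
            · rw [hbar p.1] at h1; exact BD.inv_eq_N.mp h1
            · rw [hbY p hp] at h1; exact absurd h1 (by simp)
          | bot => rfl
  · -- reg 5
    intro a yB hyB hval b b' hmeet
    have hnotY : ¬ ∀ p ∈ U, a.1 p.1 = BD.Y := by
      intro h
      have : Φ a yB = BD.Y := (hY a yB).mpr (fun p hp => ⟨h p hp, hyB p.2⟩)
      rw [hval] at this; exact BD.noConfusion this
    have hnotN : ¬ ∀ p ∈ U, a.1 p.1 = BD.N := by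
      intro h
      have : Φ a yB = BD.N := (hN a yB).mpr (fun p hp => Or.inl (h p hp))
      rw [hval] at this; exact BD.noConfusion this
    have hΦbY : Φ a b ≠ BD.Y := by
      intro h
      exact hnotY (fun p hp => ((hY a b).mp h p hp).1)
    have hΦb'Y : Φ a b' ≠ BD.Y := by
      intro h
      exact hnotY (fun p hp => ((hY a b').mp h p hp).1)
    have hnotNN : ¬ (Φ a b = BD.N ∧ Φ a b' = BD.N) := by
      rintro ⟨h1, h2⟩
      obtain ⟨p, hp, hpa⟩ : ∃ p ∈ U, a.1 p.1 ≠ BD.N := by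
        by_contra hc
        push_neg at hc
        exact hnotN hc
      have hb : b.1 p.2 = BD.N := by
        rcases (hN a b).mp h1 p hp with h | h
        · exact absurd h hpa
        · exact h
      have hb' : b'.1 p.2 = BD.N := by
        rcases (hN a b').mp h2 p hp with h | h
        · exact absurd h hpa
        · exact h
      have := hmeet p.2
      rw [hb, hb'] at this
      exact BD.noConfusion this
    cases hv : Φ a b with
    | Y => exact absurd hv hΦbY
    | N =>
      cases hw : Φ a b' with
      | Y => exact absurd hw hΦb'Y
      | N => exact absurd ⟨hv, hw⟩ hnotNN
      | bot => exact Or.inr (Or.inl ⟨rfl, rfl⟩)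
    | bot =>
      cases hw : Φ a b' with
      | Y => exact absurd hw hΦb'Y
      | N => exact Or.inl ⟨rfl, rfl⟩
      | bot => exact Or.inr (Or.inr ⟨rfl, rfl⟩)
  · -- reg 6
    intro b yA hyA hval a a' hmeet
    have hnotY : ¬ ∀ p ∈ U, b.1 p.2 = BD.Y := by
      intro h
      have : Φ yA b = BD.Y := (hY yA b).mpr (fun p hp => ⟨hyA p.1, h p hp⟩)
      rw [hval] at this; exact BD.noConfusion this
    have hnotN : ¬ ∀ p ∈ U, b.1 p.2 = BD.N := by
      intro h
      have : Φ yA b = BD.N := (hN yA b).mpr (fun p hp => Or.inr (h p hp))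
      rw [hval] at this; exact BD.noConfusion this
    have hΦaY : Φ a b ≠ BD.Y := by
      intro h
      exact hnotY (fun p hp => ((hY a b).mp h p hp).2)
    have hΦa'Y : Φ a' b ≠ BD.Y := by
      intro h
      exact hnotY (fun p hp => ((hY a' b).mp h p hp).2)
    have hnotNN : ¬ (Φ a b = BD.N ∧ Φ a' b = BD.N) := by
      rintro ⟨h1, h2⟩
      obtain ⟨p, hp, hpb⟩ : ∃ p ∈ U, b.1 p.2 ≠ BD.N := by
        by_contra hc
        push_neg at hc
        exact hnotN hc
      have ha : a.1 p.1 = BD.N := by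
        rcases (hN a b).mp h1 p hp with h | h
        · exact h
        · exact absurd h hpb
      have ha' : a'.1 p.1 = BD.N := by
        rcases (hN a' b).mp h2 p hp with h | h
        · exact h
        · exact absurd h hpb
      have := hmeet p.1
      rw [ha, ha'] at this
      exact BD.noConfusion this
    cases hv : Φ a b with
    | Y => exact absurd hv hΦaY
    | N =>
      cases hw : Φ a' b with
      | Y => exact absurd hw hΦa'Y
      | N => exact absurd ⟨hv, hw⟩ hnotNN
      | bot => exact Or.inr (Or.inl ⟨rfl, rfl⟩)
    | bot =>
      cases hw : Φ a' b with
      | Y => exact absurd hw hΦa'Y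
      | N => exact Or.inl ⟨rfl, rfl⟩
      | bot => exact Or.inr (Or.inr ⟨rfl, rfl⟩)

end MinSubReg

section Witness

variable {SA SB : Type*} [SemilatticeInf SA] [OrderBot SA] [SemilatticeInf SB] [OrderBot SB]
variable {EA : Set (SA → BD)} {EB : Set (SB → BD)}

/-- The `Y`-condition of the witness. -/
def Wyc (σ₀ : SA) (τ₀ : SB) (a : Eff EA) (b : Eff EB) : Prop :=
  a.1 σ₀ = BD.Y ∧ b.1 τ₀ = BD.Y

/-- The `N`-condition of the witness. -/
def Wnc (σ₀ c₁ c₂ c₃ : SA) (τ₀ d₁ d₂ d₃ : SB) (a : Eff EA) (b : Eff EB) : Prop :=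
  a.1 σ₀ = BD.N ∨ b.1 τ₀ = BD.N ∨
    (a.1 c₁ = BD.N ∧ b.1 d₁ = BD.N) ∨ (a.1 c₂ = BD.N ∧ b.1 d₂ = BD.N) ∨
    (a.1 c₃ = BD.N ∧ b.1 d₃ = BD.N)

open Classical in
/-- The entangled witness state. -/
noncomputable def Wphi (σ₀ c₁ c₂ c₃ : SA) (τ₀ d₁ d₂ d₃ : SB)
    (a : Eff EA) (b : Eff EB) : BD :=
  if Wyc σ₀ τ₀ a b then BD.Y
  else if Wnc σ₀ c₁ c₂ c₃ τ₀ d₁ d₂ d₃ a b then BD.N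
  else BD.bot

variable {σ₀ c₁ c₂ c₃ : SA} {τ₀ d₁ d₂ d₃ : SB}

lemma wphi_eq_Y_of {a : Eff EA} {b : Eff EB} (h : Wyc σ₀ τ₀ a b) :
    Wphi σ₀ c₁ c₂ c₃ τ₀ d₁ d₂ d₃ a b = BD.Y := by
  rw [Wphi, if_pos h]

lemma wphi_eq_N_of {a : Eff EA} {b : Eff EB} (h1 : ¬ Wyc σ₀ τ₀ a b)
    (h2 : Wnc σ₀ c₁ c₂ c₃ τ₀ d₁ d₂ d₃ a b) :
    Wphi σ₀ c₁ c₂ c₃ τ₀ d₁ d₂ d₃ a b = BD.N := by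
  rw [Wphi, if_neg h1, if_pos h2]

lemma wphi_eq_bot_of {a : Eff EA} {b : Eff EB} (h1 : ¬ Wyc σ₀ τ₀ a b)
    (h2 : ¬ Wnc σ₀ c₁ c₂ c₃ τ₀ d₁ d₂ d₃ a b) :
    Wphi σ₀ c₁ c₂ c₃ τ₀ d₁ d₂ d₃ a b = BD.bot := by
  rw [Wphi, if_neg h1, if_neg h2]

lemma wphi_eq_Y_iff {a : Eff EA} {b : Eff EB} :
    Wphi σ₀ c₁ c₂ c₃ τ₀ d₁ d₂ d₃ a b = BD.Y ↔ Wyc σ₀ τ₀ a b := by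
  constructor
  · intro h
    by_contra hy
    by_cases hn : Wnc σ₀ c₁ c₂ c₃ τ₀ d₁ d₂ d₃ a b
    · rw [wphi_eq_N_of hy hn] at h; exact BD.noConfusion h
    · rw [wphi_eq_bot_of hy hn] at h; exact BD.noConfusion h
  · exact wphi_eq_Y_of

lemma wphi_eq_N_iff {a : Eff EA} {b : Eff EB} :
    Wphi σ₀ c₁ c₂ c₃ τ₀ d₁ d₂ d₃ a b = BD.N ↔
      ¬ Wyc σ₀ τ₀ a b ∧ Wnc σ₀ c₁ c₂ c₃ τ₀ d₁ d₂ d₃ a b := by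
  constructor
  · intro h
    by_cases hy : Wyc σ₀ τ₀ a b
    · rw [wphi_eq_Y_of hy] at h; exact BD.noConfusion h
    · by_cases hn : Wnc σ₀ c₁ c₂ c₃ τ₀ d₁ d₂ d₃ a b
      · exact ⟨hy, hn⟩
      · rw [wphi_eq_bot_of hy hn] at h; exact BD.noConfusion h
  · intro ⟨h1, h2⟩; exact wphi_eq_N_of h1 h2

end Witness

/-- The map sending `N` to `N` and everything else to `⊥`. -/
def NbotMap : BD → BD
  | BD.N => BD.N
  | _ => BD.bot

lemma NbotMap_ne_Y (x : BD) : NbotMap x ≠ BD.Y := by cases x <;> simp [NbotMap]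

lemma NbotMap_eq_N_iff {x : BD} : NbotMap x = BD.N ↔ x = BD.N := by
  cases x <;> simp [NbotMap]

lemma isGLB_NbotMap {β : Type*} {F : Set β} (hFne : F.Nonempty) {g : β → BD} {v : BD}
    (h : IsGLB (g '' F) v) :
    IsGLB ((fun x => NbotMap (g x)) '' F) (NbotMap v) := by
  apply isGLB_image_of_iff hFne
  · constructor
    · intro hv; exact absurd hv (NbotMap_ne_Y v)
    · intro hall
      obtain ⟨x0, hx0⟩ := hFne
      exact absurd (hall x0 hx0) (NbotMap_ne_Y _)
  · rw [NbotMap_eq_N_iff, isGLB_image_eq_N_iff hFne h]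
    constructor
    · intro hall x hx; exact NbotMap_eq_N_iff.mpr (hall x hx)
    · intro hall x hx; exact NbotMap_eq_N_iff.mp (hall x hx)

section Witness2

variable {SA SB : Type*} [SemilatticeInf SA] [OrderBot SA] [SemilatticeInf SB] [OrderBot SB]
variable {starA : SA → SA} {starB : SB → SB}
variable {σ₀ c₁ c₂ c₃ : SA} {τ₀ d₁ d₂ d₃ : SB}

-- abbreviations
local notation "EffA" => Eff (ReducedEffects starA)
local notation "EffB" => Eff (ReducedEffects starB)
local notation "W" => Wphi (EA := ReducedEffects starA) (EB := ReducedEffects starB) σ₀ c₁ c₂ c₃ τ₀ d₁ d₂ d₃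


/-- If `b` is `Y` at `τ₀`, the witness restricts to evaluation at `σ₀`. -/
lemma wphi_yB (hB : IsTriple τ₀ d₁ d₂ d₃) {b : EffB} (hb : b.1 τ₀ = BD.Y) (a : EffA) :
    W a b = a.1 σ₀ := by
  have hbd : ∀ i : Fin 3, b.1 (if i = 0 then d₁ else if i = 1 then d₂ else d₃) = BD.Y := by
    intro i
    have hle : τ₀ ≤ (if i = 0 then d₁ else if i = 1 then d₂ else d₃) := by
      obtain ⟨h1, h2, h3⟩ := triple_le hB
      split <;> [exact h1; skip]
      split <;> [exact h2; exact h3]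
    have := effect_monotone b.2 hle
    rw [hb] at this
    exact (BD.Y_le_iff.mp this)
  have hbd1 : b.1 d₁ = BD.Y := by simpa using hbd 0
  have hbd2 : b.1 d₂ = BD.Y := by simpa using hbd 1
  have hbd3 : b.1 d₃ = BD.Y := by simpa using hbd 2
  cases ha : a.1 σ₀ with
  | Y => exact wphi_eq_Y_of ⟨ha, hb⟩
  | N =>
    apply wphi_eq_N_of
    · intro h; exact BD.noConfusion (ha.symm.trans h.1)
    · exact Or.inl ha
  | bot =>
    apply wphi_eq_bot_of
    · intro h; exact BD.noConfusion (ha.symm.trans h.1)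
    · rintro (h | h | ⟨_, h⟩ | ⟨_, h⟩ | ⟨_, h⟩)
      · rw [ha] at h; exact BD.noConfusion h
      · rw [hb] at h; exact BD.noConfusion h
      · rw [hbd1] at h; exact BD.noConfusion h
      · rw [hbd2] at h; exact BD.noConfusion h
      · rw [hbd3] at h; exact BD.noConfusion h

/-- If `a` is `Y` at `σ₀`, the witness restricts to evaluation at `τ₀`. -/
lemma wphi_yA (hA : IsTriple σ₀ c₁ c₂ c₃) {a : EffA} (ha : a.1 σ₀ = BD.Y) (b : EffB) :
    W a b = b.1 τ₀ := by
  have hac : ∀ c : SA, σ₀ ≤ c → a.1 c = BD.Y := by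
    intro c hc
    have := effect_monotone a.2 hc
    rw [ha] at this
    exact BD.Y_le_iff.mp this
  obtain ⟨h1, h2, h3⟩ := triple_le hA
  cases hb : b.1 τ₀ with
  | Y => exact wphi_eq_Y_of ⟨ha, hb⟩
  | N =>
    apply wphi_eq_N_of
    · intro h; exact BD.noConfusion (hb.symm.trans h.2)
    · exact Or.inr (Or.inl hb)
  | bot =>
    apply wphi_eq_bot_of
    · intro h; exact BD.noConfusion (hb.symm.trans h.2)
    · rintro (h | h | ⟨h, _⟩ | ⟨h, _⟩ | ⟨h, _⟩)
      · rw [ha] at h; exact BD.noConfusion h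
      · rw [hb] at h; exact BD.noConfusion h
      · rw [hac c₁ h1] at h; exact BD.noConfusion h
      · rw [hac c₂ h2] at h; exact BD.noConfusion h
      · rw [hac c₃ h3] at h; exact BD.noConfusion h

lemma wphi_nA {a : EffA} (ha : a.1 σ₀ = BD.N) (b : EffB) : W a b = BD.N := by
  apply wphi_eq_N_of
  · intro h; exact BD.noConfusion (ha.symm.trans h.1)
  · exact Or.inl ha

lemma wphi_nB {b : EffB} (hb : b.1 τ₀ = BD.N) (a : EffA) : W a b = BD.N := by
  apply wphi_eq_N_of
  · intro h; exact BD.noConfusion (hb.symm.trans h.2)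
  · exact Or.inr (Or.inl hb)

theorem wphi_mem_max (hA : IsTriple σ₀ c₁ c₂ c₃) (hB : IsTriple τ₀ d₁ d₂ d₃) :
    (W : EffA → EffB → BD) ∈
      MaxTensor (ReducedEffects starA) (ReducedEffects starB) := by
  obtain ⟨hAl1, hAl2, hAl3⟩ := triple_le hA
  obtain ⟨hBl1, hBl2, hBl3⟩ := triple_le hB
  have haN : ∀ (a : EffA) (c : SA), σ₀ ≤ c → a.1 σ₀ = BD.N → a.1 c = BD.N := by
    intro a c hc ha
    have := effect_monotone a.2 hc
    rw [ha] at this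
    exact BD.N_le_iff.mp this
  have hbN : ∀ (b : EffB) (d : SB), τ₀ ≤ d → b.1 τ₀ = BD.N → b.1 d = BD.N := by
    intro b d hd hb
    have := effect_monotone b.2 hd
    rw [hb] at this
    exact BD.N_le_iff.mp this
  refine ⟨?_, ?_, ?_, ?_, ?_⟩
  · -- (i) infima in the first argument
    intro F hFne f hf b
    cases hbτ : b.1 τ₀ with
    | Y =>
      have himg : (fun a : EffA => W a b) '' F = (fun a : EffA => a.1 σ₀) '' F :=
        Set.image_congr (fun x _ => wphi_yB hB hbτ x)
      rw [himg, wphi_yB hB hbτ f]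
      exact hf σ₀
    | N =>
      rw [wphi_nB hbτ f]
      exact isGLB_allN hFne (fun x _ => wphi_nB hbτ x)
    | bot =>
      have hyc : ∀ x : EffA, ¬ Wyc σ₀ τ₀ x b := by
        intro x h; exact BD.noConfusion (hbτ.symm.trans h.2)
      -- at most one active clause
      have hpair : ∀ {di dj : SB}, di ⊓ dj = τ₀ → b.1 di = BD.N → b.1 dj = BD.N → False := by
        intro di dj hmeet hi hj
        have := effect_inf_N b.2 hi hj
        rw [hmeet, hbτ] at this
        exact BD.noConfusion this
      by_cases h1 : b.1 d₁ = BD.N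
      · by_cases h2 : b.1 d₂ = BD.N
        · exact absurd (hpair hB.1 h1 h2) (fun h => h)
        · by_cases h3 : b.1 d₃ = BD.N
          · exact absurd (hpair hB.2.1 h1 h3) (fun h => h)
          · -- only clause 1 active
            have hval : ∀ x : EffA, W x b = NbotMap (x.1 c₁) := by
              intro x
              cases hx : x.1 c₁ with
              | N => rw [show NbotMap BD.N = BD.N from rfl]
                     exact wphi_eq_N_of (hyc x) (Or.inr (Or.inr (Or.inl ⟨hx, h1⟩)))
              | Y =>
                rw [show NbotMap BD.Y = BD.bot from rfl]
                apply wphi_eq_bot_of (hyc x)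
                rintro (h | h | ⟨h, _⟩ | ⟨_, h⟩ | ⟨_, h⟩)
                · rw [haN x c₁ hAl1 h] at hx; exact BD.noConfusion hx
                · rw [hbτ] at h; exact BD.noConfusion h
                · rw [h] at hx; exact BD.noConfusion hx
                · exact h2 h
                · exact h3 h
              | bot =>
                rw [show NbotMap BD.bot = BD.bot from rfl]
                apply wphi_eq_bot_of (hyc x)
                rintro (h | h | ⟨h, _⟩ | ⟨_, h⟩ | ⟨_, h⟩)
                · rw [haN x c₁ hAl1 h] at hx; exact BD.noConfusion hx
                · rw [hbτ] at h; exact BD.noConfusion h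
                · rw [h] at hx; exact BD.noConfusion hx
                · exact h2 h
                · exact h3 h
            rw [Set.image_congr (fun x _ => hval x), hval f]
            exact isGLB_NbotMap hFne (hf c₁)
      · by_cases h2 : b.1 d₂ = BD.N
        · by_cases h3 : b.1 d₃ = BD.N
          · exact absurd (hpair hB.2.2.1 h2 h3) (fun h => h)
          · -- only clause 2 active
            have hval : ∀ x : EffA, W x b = NbotMap (x.1 c₂) := by
              intro x
              cases hx : x.1 c₂ with
              | N => rw [show NbotMap BD.N = BD.N from rfl]
                     exact wphi_eq_N_of (hyc x) (Or.inr (Or.inr (Or.inr (Or.inl ⟨hx, h2⟩))))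
              | Y =>
                rw [show NbotMap BD.Y = BD.bot from rfl]
                apply wphi_eq_bot_of (hyc x)
                rintro (h | h | ⟨_, h⟩ | ⟨h, _⟩ | ⟨_, h⟩)
                · rw [haN x c₂ hAl2 h] at hx; exact BD.noConfusion hx
                · rw [hbτ] at h; exact BD.noConfusion h
                · exact h1 h
                · rw [h] at hx; exact BD.noConfusion hx
                · exact h3 h
              | bot =>
                rw [show NbotMap BD.bot = BD.bot from rfl]
                apply wphi_eq_bot_of (hyc x)
                rintro (h | h | ⟨_, h⟩ | ⟨h, _⟩ | ⟨_, h⟩)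
                · rw [haN x c₂ hAl2 h] at hx; exact BD.noConfusion hx
                · rw [hbτ] at h; exact BD.noConfusion h
                · exact h1 h
                · rw [h] at hx; exact BD.noConfusion hx
                · exact h3 h
            rw [Set.image_congr (fun x _ => hval x), hval f]
            exact isGLB_NbotMap hFne (hf c₂)
        · by_cases h3 : b.1 d₃ = BD.N
          · -- only clause 3 active
            have hval : ∀ x : EffA, W x b = NbotMap (x.1 c₃) := by
              intro x
              cases hx : x.1 c₃ with
              | N => rw [show NbotMap BD.N = BD.N from rfl]
                     exact wphi_eq_N_of (hyc x)
                       (Or.inr (Or.inr (Or.inr (Or.inr ⟨hx, h3⟩))))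
              | Y =>
                rw [show NbotMap BD.Y = BD.bot from rfl]
                apply wphi_eq_bot_of (hyc x)
                rintro (h | h | ⟨_, h⟩ | ⟨_, h⟩ | ⟨h, _⟩)
                · rw [haN x c₃ hAl3 h] at hx; exact BD.noConfusion hx
                · rw [hbτ] at h; exact BD.noConfusion h
                · exact h1 h
                · exact h2 h
                · rw [h] at hx; exact BD.noConfusion hx
              | bot =>
                rw [show NbotMap BD.bot = BD.bot from rfl]
                apply wphi_eq_bot_of (hyc x)
                rintro (h | h | ⟨_, h⟩ | ⟨_, h⟩ | ⟨h, _⟩)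
                · rw [haN x c₃ hAl3 h] at hx; exact BD.noConfusion hx
                · rw [hbτ] at h; exact BD.noConfusion h
                · exact h1 h
                · exact h2 h
                · rw [h] at hx; exact BD.noConfusion hx
            rw [Set.image_congr (fun x _ => hval x), hval f]
            exact isGLB_NbotMap hFne (hf c₃)
          · -- no clause active
            have hval : ∀ x : EffA, W x b = NbotMap (x.1 σ₀) := by
              intro x
              cases hx : x.1 σ₀ with
              | N => rw [show NbotMap BD.N = BD.N from rfl]
                     exact wphi_eq_N_of (hyc x) (Or.inl hx)
              | Y =>
                rw [show NbotMap BD.Y = BD.bot from rfl]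
                apply wphi_eq_bot_of (hyc x)
                rintro (h | h | ⟨_, h⟩ | ⟨_, h⟩ | ⟨_, h⟩)
                · rw [h] at hx; exact BD.noConfusion hx
                · rw [hbτ] at h; exact BD.noConfusion h
                · exact h1 h
                · exact h2 h
                · exact h3 h
              | bot =>
                rw [show NbotMap BD.bot = BD.bot from rfl]
                apply wphi_eq_bot_of (hyc x)
                rintro (h | h | ⟨_, h⟩ | ⟨_, h⟩ | ⟨_, h⟩)
                · rw [h] at hx; exact BD.noConfusion hx
                · rw [hbτ] at h; exact BD.noConfusion h
                · exact h1 h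
                · exact h2 h
                · exact h3 h
            rw [Set.image_congr (fun x _ => hval x), hval f]
            exact isGLB_NbotMap hFne (hf σ₀)
  · -- (ii) infima in the second argument
    intro G hGne g hg a
    cases haσ : a.1 σ₀ with
    | Y =>
      have himg : (fun b : EffB => W a b) '' G = (fun b : EffB => b.1 τ₀) '' G :=
        Set.image_congr (fun x _ => wphi_yA hA haσ x)
      rw [himg, wphi_yA hA haσ g]
      exact hg τ₀
    | N =>
      rw [wphi_nA haσ g]
      exact isGLB_allN hGne (fun x _ => wphi_nA haσ x)
    | bot =>
      have hyc : ∀ x : EffB, ¬ Wyc σ₀ τ₀ a x := by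
        intro x h; exact BD.noConfusion (haσ.symm.trans h.1)
      have hpair : ∀ {ci cj : SA}, ci ⊓ cj = σ₀ → a.1 ci = BD.N → a.1 cj = BD.N → False := by
        intro ci cj hmeet hi hj
        have := effect_inf_N a.2 hi hj
        rw [hmeet, haσ] at this
        exact BD.noConfusion this
      by_cases h1 : a.1 c₁ = BD.N
      · by_cases h2 : a.1 c₂ = BD.N
        · exact absurd (hpair hA.1 h1 h2) (fun h => h)
        · by_cases h3 : a.1 c₃ = BD.N
          · exact absurd (hpair hA.2.1 h1 h3) (fun h => h)
          · have hval : ∀ x : EffB, W a x = NbotMap (x.1 d₁) := by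
              intro x
              cases hx : x.1 d₁ with
              | N => rw [show NbotMap BD.N = BD.N from rfl]
                     exact wphi_eq_N_of (hyc x) (Or.inr (Or.inr (Or.inl ⟨h1, hx⟩)))
              | Y =>
                rw [show NbotMap BD.Y = BD.bot from rfl]
                apply wphi_eq_bot_of (hyc x)
                rintro (h | h | ⟨_, h⟩ | ⟨h, _⟩ | ⟨h, _⟩)
                · rw [haσ] at h; exact BD.noConfusion h
                · rw [hbN x d₁ hBl1 h] at hx; exact BD.noConfusion hx
                · rw [h] at hx; exact BD.noConfusion hx
                · exact h2 h
                · exact h3 h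
              | bot =>
                rw [show NbotMap BD.bot = BD.bot from rfl]
                apply wphi_eq_bot_of (hyc x)
                rintro (h | h | ⟨_, h⟩ | ⟨h, _⟩ | ⟨h, _⟩)
                · rw [haσ] at h; exact BD.noConfusion h
                · rw [hbN x d₁ hBl1 h] at hx; exact BD.noConfusion hx
                · rw [h] at hx; exact BD.noConfusion hx
                · exact h2 h
                · exact h3 h
            rw [Set.image_congr (fun x _ => hval x), hval g]
            exact isGLB_NbotMap hGne (hg d₁)
      · by_cases h2 : a.1 c₂ = BD.N
        · by_cases h3 : a.1 c₃ = BD.N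
          · exact absurd (hpair hA.2.2.1 h2 h3) (fun h => h)
          · have hval : ∀ x : EffB, W a x = NbotMap (x.1 d₂) := by
              intro x
              cases hx : x.1 d₂ with
              | N => rw [show NbotMap BD.N = BD.N from rfl]
                     exact wphi_eq_N_of (hyc x) (Or.inr (Or.inr (Or.inr (Or.inl ⟨h2, hx⟩))))
              | Y =>
                rw [show NbotMap BD.Y = BD.bot from rfl]
                apply wphi_eq_bot_of (hyc x)
                rintro (h | h | ⟨h, _⟩ | ⟨_, h⟩ | ⟨h, _⟩)
                · rw [haσ] at h; exact BD.noConfusion h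
                · rw [hbN x d₂ hBl2 h] at hx; exact BD.noConfusion hx
                · exact h1 h
                · rw [h] at hx; exact BD.noConfusion hx
                · exact h3 h
              | bot =>
                rw [show NbotMap BD.bot = BD.bot from rfl]
                apply wphi_eq_bot_of (hyc x)
                rintro (h | h | ⟨h, _⟩ | ⟨_, h⟩ | ⟨h, _⟩)
                · rw [haσ] at h; exact BD.noConfusion h
                · rw [hbN x d₂ hBl2 h] at hx; exact BD.noConfusion hx
                · exact h1 h
                · rw [h] at hx; exact BD.noConfusion hx
                · exact h3 h
            rw [Set.image_congr (fun x _ => hval x), hval g]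
            exact isGLB_NbotMap hGne (hg d₂)
        · by_cases h3 : a.1 c₃ = BD.N
          · have hval : ∀ x : EffB, W a x = NbotMap (x.1 d₃) := by
              intro x
              cases hx : x.1 d₃ with
              | N => rw [show NbotMap BD.N = BD.N from rfl]
                     exact wphi_eq_N_of (hyc x)
                       (Or.inr (Or.inr (Or.inr (Or.inr ⟨h3, hx⟩))))
              | Y =>
                rw [show NbotMap BD.Y = BD.bot from rfl]
                apply wphi_eq_bot_of (hyc x)
                rintro (h | h | ⟨h, _⟩ | ⟨h, _⟩ | ⟨_, h⟩)
                · rw [haσ] at h; exact BD.noConfusion h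
                · rw [hbN x d₃ hBl3 h] at hx; exact BD.noConfusion hx
                · exact h1 h
                · exact h2 h
                · rw [h] at hx; exact BD.noConfusion hx
              | bot =>
                rw [show NbotMap BD.bot = BD.bot from rfl]
                apply wphi_eq_bot_of (hyc x)
                rintro (h | h | ⟨h, _⟩ | ⟨h, _⟩ | ⟨_, h⟩)
                · rw [haσ] at h; exact BD.noConfusion h
                · rw [hbN x d₃ hBl3 h] at hx; exact BD.noConfusion hx
                · exact h1 h
                · exact h2 h
                · rw [h] at hx; exact BD.noConfusion hx
            rw [Set.image_congr (fun x _ => hval x), hval g]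
            exact isGLB_NbotMap hGne (hg d₃)
          · have hval : ∀ x : EffB, W a x = NbotMap (x.1 τ₀) := by
              intro x
              cases hx : x.1 τ₀ with
              | N => rw [show NbotMap BD.N = BD.N from rfl]
                     exact wphi_eq_N_of (hyc x) (Or.inr (Or.inl hx))
              | Y =>
                rw [show NbotMap BD.Y = BD.bot from rfl]
                apply wphi_eq_bot_of (hyc x)
                rintro (h | h | ⟨h, _⟩ | ⟨h, _⟩ | ⟨h, _⟩)
                · rw [haσ] at h; exact BD.noConfusion h
                · rw [h] at hx; exact BD.noConfusion hx
                · exact h1 h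
                · exact h2 h
                · exact h3 h
              | bot =>
                rw [show NbotMap BD.bot = BD.bot from rfl]
                apply wphi_eq_bot_of (hyc x)
                rintro (h | h | ⟨h, _⟩ | ⟨h, _⟩ | ⟨h, _⟩)
                · rw [haσ] at h; exact BD.noConfusion h
                · rw [h] at hx; exact BD.noConfusion hx
                · exact h1 h
                · exact h2 h
                · exact h3 h
            rw [Set.image_congr (fun x _ => hval x), hval g]
            exact isGLB_NbotMap hGne (hg τ₀)
  · -- (iii) involution in the first argument
    intro a abar yB hbar hyB
    rw [wphi_yB hB (hyB τ₀) abar, wphi_yB hB (hyB τ₀) a]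
    exact hbar σ₀
  · -- (iv) involution in the second argument
    intro b bbar yA hbar hyA
    rw [wphi_yA hA (hyA σ₀) bbar, wphi_yA hA (hyA σ₀) b]
    exact hbar τ₀
  · -- (v)
    intro yA yB hyA hyB
    exact wphi_eq_Y_of ⟨hyA σ₀, hyB τ₀⟩

end Witness2

section Witness3

variable {SA SB : Type*} [SemilatticeInf SA] [OrderBot SA] [SemilatticeInf SB] [OrderBot SB]
variable {starA : SA → SA} {starB : SB → SB}
variable {σ₀ c₁ c₂ c₃ : SA} {τ₀ d₁ d₂ d₃ : SB}

local notation "EffA" => Eff (ReducedEffects starA)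
local notation "EffB" => Eff (ReducedEffects starB)
local notation "W" => Wphi (EA := ReducedEffects starA) (EB := ReducedEffects starB) σ₀ c₁ c₂ c₃ τ₀ d₁ d₂ d₃

theorem wphi_mem_reg (hA : IsTriple σ₀ c₁ c₂ c₃) (hB : IsTriple τ₀ d₁ d₂ d₃) :
    (W : EffA → EffB → BD) ∈
      RegTensor (ReducedEffects starA) (ReducedEffects starB) := by
  obtain ⟨hAl1, hAl2, hAl3⟩ := triple_le hA
  obtain ⟨hBl1, hBl2, hBl3⟩ := triple_le hB
  have haN : ∀ (a : EffA) (c : SA), σ₀ ≤ c → a.1 σ₀ = BD.N → a.1 c = BD.N := by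
    intro a c hc ha
    have := effect_monotone a.2 hc
    rw [ha] at this
    exact BD.N_le_iff.mp this
  have hbN : ∀ (b : EffB) (d : SB), τ₀ ≤ d → b.1 τ₀ = BD.N → b.1 d = BD.N := by
    intro b d hd hb
    have := effect_monotone b.2 hd
    rw [hb] at this
    exact BD.N_le_iff.mp this
  refine ⟨wphi_mem_max hA hB, ?_, ?_, ?_, ?_, ?_, ?_⟩
  · intro a nB hnB
    exact wphi_nB (hnB τ₀) a
  · intro nA b hnA
    exact wphi_nA (hnA σ₀) b
  · -- reg 3
    intro a yB hyB hval b bbar hbar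
    rw [wphi_yB hB (hyB τ₀) a] at hval
    rw [wphi_yA hA hval b, wphi_yA hA hval bbar, hbar τ₀]
    cases hb : b.1 τ₀ with
    | Y => exact Or.inl ⟨rfl, rfl⟩
    | N => exact Or.inr (Or.inl ⟨rfl, rfl⟩)
    | bot => exact Or.inr (Or.inr ⟨rfl, rfl⟩)
  · -- reg 4
    intro b yA hyA hval a abar hbar
    rw [wphi_yA hA (hyA σ₀) b] at hval
    rw [wphi_yB hB hval a, wphi_yB hB hval abar, hbar σ₀]
    cases ha : a.1 σ₀ with
    | Y => exact Or.inl ⟨rfl, rfl⟩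
    | N => exact Or.inr (Or.inl ⟨rfl, rfl⟩)
    | bot => exact Or.inr (Or.inr ⟨rfl, rfl⟩)
  · -- reg 5
    intro a yB hyB hval b b' hmeet
    rw [wphi_yB hB (hyB τ₀) a] at hval
    have hmeetN : ∀ (x x' : EffB) (d : SB), x.1 d = BD.N → x'.1 d = BD.N →
        x.1 d ⊓ x'.1 d = BD.bot → False := by
      intro x x' d h1 h2 h3
      rw [h1, h2] at h3
      exact BD.noConfusion h3
    have hnotY : ∀ x : EffB, W a x ≠ BD.Y := by
      intro x h
      have := (wphi_eq_Y_iff.mp h).1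
      rw [hval] at this
      exact BD.noConfusion this
    have hext : ∀ x : EffB, W a x = BD.N →
        x.1 τ₀ = BD.N ∨ (a.1 c₁ = BD.N ∧ x.1 d₁ = BD.N) ∨
          (a.1 c₂ = BD.N ∧ x.1 d₂ = BD.N) ∨ (a.1 c₃ = BD.N ∧ x.1 d₃ = BD.N) := by
      intro x h
      rcases (wphi_eq_N_iff.mp h).2 with h | h | h | h | h
      · rw [hval] at h; exact BD.noConfusion h
      · exact Or.inl h
      · exact Or.inr (Or.inl h)
      · exact Or.inr (Or.inr (Or.inl h))
      · exact Or.inr (Or.inr (Or.inr h))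
    have hAinf : ∀ {ci cj : SA}, ci ⊓ cj = σ₀ → a.1 ci = BD.N → a.1 cj = BD.N → False := by
      intro ci cj hm hi hj
      have := effect_inf_N a.2 hi hj
      rw [hm, hval] at this
      exact BD.noConfusion this
    have hnotNN : ¬ (W a b = BD.N ∧ W a b' = BD.N) := by
      rintro ⟨h1, h2⟩
      rcases hext b h1 with hb1 | ⟨hac, hbd⟩ | ⟨hac, hbd⟩ | ⟨hac, hbd⟩ <;>
        rcases hext b' h2 with hb1' | ⟨hac', hbd'⟩ | ⟨hac', hbd'⟩ | ⟨hac', hbd'⟩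
      · exact hmeetN b b' τ₀ hb1 hb1' (hmeet τ₀)
      · exact hmeetN b b' d₁ (hbN b d₁ hBl1 hb1) hbd' (hmeet d₁)
      · exact hmeetN b b' d₂ (hbN b d₂ hBl2 hb1) hbd' (hmeet d₂)
      · exact hmeetN b b' d₃ (hbN b d₃ hBl3 hb1) hbd' (hmeet d₃)
      · exact hmeetN b b' d₁ hbd (hbN b' d₁ hBl1 hb1') (hmeet d₁)
      · exact hmeetN b b' d₁ hbd hbd' (hmeet d₁)
      · exact hAinf hA.1 hac hac'
      · exact hAinf hA.2.1 hac hac'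
      · exact hmeetN b b' d₂ hbd (hbN b' d₂ hBl2 hb1') (hmeet d₂)
      · exact hAinf hA.1 hac' hac
      · exact hmeetN b b' d₂ hbd hbd' (hmeet d₂)
      · exact hAinf hA.2.2.1 hac hac'
      · exact hmeetN b b' d₃ hbd (hbN b' d₃ hBl3 hb1') (hmeet d₃)
      · exact hAinf hA.2.1 hac' hac
      · exact hAinf hA.2.2.1 hac' hac
      · exact hmeetN b b' d₃ hbd hbd' (hmeet d₃)
    cases hv : W a b with
    | Y => exact absurd hv (hnotY b)
    | N =>
      cases hw : W a b' with
      | Y => exact absurd hw (hnotY b')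
      | N => exact absurd ⟨hv, hw⟩ hnotNN
      | bot => exact Or.inr (Or.inl ⟨rfl, rfl⟩)
    | bot =>
      cases hw : W a b' with
      | Y => exact absurd hw (hnotY b')
      | N => exact Or.inl ⟨rfl, rfl⟩
      | bot => exact Or.inr (Or.inr ⟨rfl, rfl⟩)
  · -- reg 6
    intro b yA hyA hval a a' hmeet
    rw [wphi_yA hA (hyA σ₀) b] at hval
    have hmeetN : ∀ (x x' : EffA) (c : SA), x.1 c = BD.N → x'.1 c = BD.N →
        x.1 c ⊓ x'.1 c = BD.bot → False := by
      intro x x' c h1 h2 h3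
      rw [h1, h2] at h3
      exact BD.noConfusion h3
    have hnotY : ∀ x : EffA, W x b ≠ BD.Y := by
      intro x h
      have := (wphi_eq_Y_iff.mp h).2
      rw [hval] at this
      exact BD.noConfusion this
    have hext : ∀ x : EffA, W x b = BD.N →
        x.1 σ₀ = BD.N ∨ (x.1 c₁ = BD.N ∧ b.1 d₁ = BD.N) ∨
          (x.1 c₂ = BD.N ∧ b.1 d₂ = BD.N) ∨ (x.1 c₃ = BD.N ∧ b.1 d₃ = BD.N) := by
      intro x h
      rcases (wphi_eq_N_iff.mp h).2 with h | h | h | h | h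
      · exact Or.inl h
      · rw [hval] at h; exact BD.noConfusion h
      · exact Or.inr (Or.inl h)
      · exact Or.inr (Or.inr (Or.inl h))
      · exact Or.inr (Or.inr (Or.inr h))
    have hBinf : ∀ {di dj : SB}, di ⊓ dj = τ₀ → b.1 di = BD.N → b.1 dj = BD.N → False := by
      intro di dj hm hi hj
      have := effect_inf_N b.2 hi hj
      rw [hm, hval] at this
      exact BD.noConfusion this
    have hnotNN : ¬ (W a b = BD.N ∧ W a' b = BD.N) := by
      rintro ⟨h1, h2⟩
      rcases hext a h1 with ha1 | ⟨hac, hbd⟩ | ⟨hac, hbd⟩ | ⟨hac, hbd⟩ <;>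
        rcases hext a' h2 with ha1' | ⟨hac', hbd'⟩ | ⟨hac', hbd'⟩ | ⟨hac', hbd'⟩
      · exact hmeetN a a' σ₀ ha1 ha1' (hmeet σ₀)
      · exact hmeetN a a' c₁ (haN a c₁ hAl1 ha1) hac' (hmeet c₁)
      · exact hmeetN a a' c₂ (haN a c₂ hAl2 ha1) hac' (hmeet c₂)
      · exact hmeetN a a' c₃ (haN a c₃ hAl3 ha1) hac' (hmeet c₃)
      · exact hmeetN a a' c₁ hac (haN a' c₁ hAl1 ha1') (hmeet c₁)
      · exact hmeetN a a' c₁ hac hac' (hmeet c₁)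
      · exact hBinf hB.1 hbd hbd'
      · exact hBinf hB.2.1 hbd hbd'
      · exact hmeetN a a' c₂ hac (haN a' c₂ hAl2 ha1') (hmeet c₂)
      · exact hBinf hB.1 hbd' hbd
      · exact hmeetN a a' c₂ hac hac' (hmeet c₂)
      · exact hBinf hB.2.2.1 hbd hbd'
      · exact hmeetN a a' c₃ hac (haN a' c₃ hAl3 ha1') (hmeet c₃)
      · exact hBinf hB.2.1 hbd' hbd
      · exact hBinf hB.2.2.1 hbd' hbd
      · exact hmeetN a a' c₃ hac hac' (hmeet c₃)
    cases hv : W a b with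
    | Y => exact absurd hv (hnotY a)
    | N =>
      cases hw : W a' b with
      | Y => exact absurd hw (hnotY a')
      | N => exact absurd ⟨hv, hw⟩ hnotNN
      | bot => exact Or.inr (Or.inl ⟨rfl, rfl⟩)
    | bot =>
      cases hw : W a' b with
      | Y => exact absurd hw (hnotY a')
      | N => exact Or.inl ⟨rfl, rfl⟩
      | bot => exact Or.inr (Or.inr ⟨rfl, rfl⟩)

theorem wphi_not_min (hA : IsTriple σ₀ c₁ c₂ c₃) (hB : IsTriple τ₀ d₁ d₂ d₃) :
    (W : EffA → EffB → BD) ∉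
      MinTensor (ReducedEffects starA) (ReducedEffects starB) := by
  rintro ⟨U, hUne, hglb⟩
  obtain ⟨p, hp⟩ := hUne
  have hUne' : U.Nonempty := ⟨p, hp⟩
  have key : ∀ (c : SA) (d : SB),
      Wnc σ₀ c₁ c₂ c₃ τ₀ d₁ d₂ d₃ (EA := ReducedEffects starA) (EB := ReducedEffects starB)
        ⟨nEff c, nEff_mem starA c⟩ ⟨nEff d, nEff_mem starB d⟩ →
      c ≤ p.1 ∨ d ≤ p.2 := by
    intro c d hnc
    have hval : W (⟨nEff c, nEff_mem starA c⟩ : EffA) (⟨nEff d, nEff_mem starB d⟩ : EffB) = BD.N := by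
      apply wphi_eq_N_of
      · intro h
        exact nEff_ne_Y c σ₀ h.1
      · exact hnc
    have h2 := (isGLB_image_eq_N_iff hUne'
      (hglb ⟨nEff c, nEff_mem starA c⟩ ⟨nEff d, nEff_mem starB d⟩)).mp hval p hp
    rcases (pureT_eq_N _ _).mp h2 with h | h
    · exact Or.inl (nEff_eq_N_iff.mp h)
    · exact Or.inr (nEff_eq_N_iff.mp h)
  have k1 : c₁ ≤ p.1 ∨ d₁ ≤ p.2 := by
    apply key c₁ d₁
    exact Or.inr (Or.inr (Or.inl ⟨nEff_apply_of_le (le_refl c₁), nEff_apply_of_le (le_refl d₁)⟩))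
  have k2 : c₂ ≤ p.1 ∨ d₂ ≤ p.2 := by
    apply key c₂ d₂
    exact Or.inr (Or.inr (Or.inr (Or.inl
      ⟨nEff_apply_of_le (le_refl c₂), nEff_apply_of_le (le_refl d₂)⟩)))
  have k3 : c₃ ≤ p.1 ∨ d₃ ≤ p.2 := by
    apply key c₃ d₃
    exact Or.inr (Or.inr (Or.inr (Or.inr
      ⟨nEff_apply_of_le (le_refl c₃), nEff_apply_of_le (le_refl d₃)⟩)))
  obtain ⟨_, _, _, nA12, nA13, nA23⟩ := hA
  obtain ⟨_, _, _, nB12, nB13, nB23⟩ := hB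
  rcases k1 with k1 | k1
  · rcases k2 with k2 | k2
    · exact nA12 ⟨p.1, k1, k2⟩
    · rcases k3 with k3 | k3
      · exact nA13 ⟨p.1, k1, k3⟩
      · exact nB23 ⟨p.2, k2, k3⟩
  · rcases k2 with k2 | k2
    · rcases k3 with k3 | k3
      · exact nA23 ⟨p.1, k2, k3⟩
      · exact nB13 ⟨p.2, k1, k3⟩
    · exact nB12 ⟨p.2, k1, k2⟩

end Witness3
/-- if neither orthocomplemented space of states (with pure
descriptions, and with reduced effect spaces) is a simplex, then the minimal tensor
product is strictly contained in the regular one. -/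
theorem min_ssubset_reg_of_not_simplex {SA SB : Type*}
    [SemilatticeInf SA] [OrderBot SA] [SemilatticeInf SB] [OrderBot SB]
    (hdcA : DownComplete SA) (hdcB : DownComplete SB)
    (hpdA : PureDescription SA) (hpdB : PureDescription SB)
    (starA : SA → SA) (starB : SB → SB)
    (hoA : IsOrtho starA) (hoB : IsOrtho starB)
    (hnsA : ¬ Simplex SA) (hnsB : ¬ Simplex SB) :
    MinTensor (ReducedEffects starA) (ReducedEffects starB) ⊂
      RegTensor (ReducedEffects starA) (ReducedEffects starB) := by
  obtain ⟨σ₀, c₁, c₂, c₃, hA⟩ := exists_triple hdcA hpdA hoA hnsA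
  obtain ⟨τ₀, d₁, d₂, d₃, hB⟩ := exists_triple hdcB hpdB hoB hnsB
  rw [Set.ssubset_def]
  refine ⟨min_subset_reg _ _, fun hc => ?_⟩
  exact wphi_not_min hA hB (hc (wphi_mem_reg hA hB))
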